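/- Let n ≥ 2, Λ = (λ₁,…,λ_{n+1}) ∈ ℝ^{n+1} and 𝐤 = (k₁,…,k_n) ∈ ℕⁿ. Set 𝐤̃ = (k₂,…,k_n) and Λ̃ = (λ₁+λ₂+2k₁, λ₃, …, λ_{n+1}), and let φ(y,u) = (y₁(1+u)/2, y₁(1−u)/2, y₂, …, y_{n−1}) for y ∈ D_{n−1}, u ∈ (−1,1). Then for all y ∈ D_{n−1} and u ∈ (−1,1): R_𝐤^Λ(φ(y,u)) = R_{𝐤̃}^{Λ̃}(y) · P_{k₁}^{λ₂−1, λ₁−1}(u) · y₁^{k₁}, where R_𝐤^Λ is the family on D_n and R_{𝐤̃}^{Λ̃} is the analogous family on D_{n−1}. -/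

import Mathlib

open MeasureTheory Finset

noncomputable section

/-- Generalized binomial coefficient `C(z, m) = z(z-1)⋯(z-m+1)/m!`. -/
def genBinom (z : ℝ) (m : ℕ) : ℝ := (∏ i ∈ Finset.range m, (z - i)) / (m.factorial : ℝ)

/-- Jacobi polynomial `P_n^{α,β}(t)`. -/
def jacobiP (n : ℕ) (α β t : ℝ) : ℝ :=
  (1 / 2 ^ n) * ∑ s ∈ Finset.range (n + 1),
    genBinom ((n : ℝ) + α) (n - s) * genBinom ((n : ℝ) + β) s * (t - 1) ^ s * (t + 1) ^ (n - s)

/-- Sum of the first `m` coordinates of `x`. -/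
def psum {n : ℕ} (x : Fin n → ℝ) (m : ℕ) : ℝ :=
  ∑ j : Fin n, if (j : ℕ) < m then x j else 0

/-- The open simplex `D_n`. -/
def simplexD (n : ℕ) : Set (Fin n → ℝ) := {x | (∀ i, 0 < x i) ∧ psum x n < 1}

/-- `α_i = |Λ^{(i)}| + 2|𝐤^{(i-1)}|` (1-based `i`). -/
def alphExp {n : ℕ} (Λ : Fin (n + 1) → ℝ) (k : Fin n → ℕ) (i : ℕ) : ℝ :=
  (∑ j : Fin (n + 1), if (j : ℕ) < i then Λ j else 0)
    + 2 * ∑ j : Fin n, if (j : ℕ) < i - 1 then (k j : ℝ) else 0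

/-- The orthogonal polynomials `R_𝐤^Λ` on the simplex `D_n`. -/
def Rpoly {n : ℕ} (Λ : Fin (n + 1) → ℝ) (k : Fin n → ℕ) (x : Fin n → ℝ) : ℝ :=
  (if h : 0 < n then
      jacobiP (k ⟨n - 1, by omega⟩) (Λ (Fin.last n) - 1) (alphExp Λ k n - 1)
        (2 * psum x n - 1)
    else 1) *
  ∏ j : Fin n, (if h : (j : ℕ) + 1 < n then
      (psum x ((j : ℕ) + 1) + x ⟨(j : ℕ) + 1, h⟩) ^ (k j) *
        jacobiP (k j) (Λ ⟨(j : ℕ) + 1, by omega⟩ - 1) (alphExp Λ k ((j : ℕ) + 1) - 1)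
          ((psum x ((j : ℕ) + 1) - x ⟨(j : ℕ) + 1, h⟩) /
            (psum x ((j : ℕ) + 1) + x ⟨(j : ℕ) + 1, h⟩))
    else 1)

/-- The map `φ(y,u) = (y₁(1+u)/2, y₁(1-u)/2, y₂, …, y_{n-1})` from
`D_{n-1} × (-1,1)` to `D_n`. -/
def phiMap (n : ℕ) (hn : 2 ≤ n) (y : Fin (n - 1) → ℝ) (u : ℝ) : Fin n → ℝ := fun j =>
  if h0 : (j : ℕ) = 0 then y ⟨0, by omega⟩ * (1 + u) / 2
  else if h1 : (j : ℕ) = 1 then y ⟨0, by omega⟩ * (1 - u) / 2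
  else y ⟨(j : ℕ) - 1, by have := j.isLt; omega⟩

lemma psum_zero {n : ℕ} (x : Fin n → ℝ) : psum x 0 = 0 := by simp [psum]

/-!
Splitting off the first factor of the product defining `R_𝐤^Λ(x)` leaves exactly
`R_{𝐤̃}^{Λ̃}` evaluated at `(x₁ + x₂, x₃, …, x_n)`: merging the first two coordinates of `x`
and of `Λ` does not change the partial sums `|x^{(i)}|` for `i ≥ 2`, nor the exponents `αᵢ`
for `i ≥ 2`, the summand `2k₁` of `Λ̃` compensating for `k₁` leaving `|𝐤^{(i-1)}|`.
For `x = φ(y, u)` one has `x₁ + x₂ = y₁` and `(x₁ - x₂)/(x₁ + x₂) = u`, and `α₁ = λ₁`, so the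
split-off factor is `y₁^{k₁} P_{k₁}^{λ₂-1, λ₁-1}(u)`.
-/

lemma psum_succ {n : ℕ} (x : Fin (n + 1) → ℝ) (i : ℕ) :
    psum x (i + 1) = x 0 + psum (fun j => x j.succ) i := by
  simp [psum, Fin.sum_univ_succ]

lemma psum_one {n : ℕ} (x : Fin (n + 1) → ℝ) : psum x 1 = x 0 := by
  simp [psum]

lemma alphExp_eq_psum {n : ℕ} (Λ : Fin (n + 1) → ℝ) (k : Fin n → ℕ) (i : ℕ) :
    alphExp Λ k i = psum Λ i + 2 * psum (fun j => (k j : ℝ)) (i - 1) := rfl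

lemma alphExp_one {n : ℕ} (Λ : Fin (n + 1) → ℝ) (k : Fin n → ℕ) : alphExp Λ k 1 = Λ 0 := by
  simp [alphExp]

def mergeHead {n : ℕ} (x : Fin (n + 2) → ℝ) : Fin (n + 1) → ℝ :=
  Fin.cons (x 0 + x 1) (Fin.tail (Fin.tail x))

def mergeHeadParams {n : ℕ} (Λ : Fin (n + 2) → ℝ) (k : Fin (n + 1) → ℕ) : Fin (n + 1) → ℝ :=
  Fin.cons (Λ 0 + Λ 1 + 2 * k 0) (Fin.tail (Fin.tail Λ))

lemma psum_mergeHead {n : ℕ} (x : Fin (n + 2) → ℝ) (i : ℕ) :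
    psum (mergeHead x) (i + 1) = psum x (i + 1 + 1) := by
  simp only [mergeHead, psum_succ, Fin.cons_zero, Fin.cons_succ, Fin.tail, Fin.succ_zero_eq_one]
  ring

lemma alphExp_mergeHeadParams {n : ℕ} (Λ : Fin (n + 2) → ℝ) (k : Fin (n + 1) → ℕ) (i : ℕ) :
    alphExp (mergeHeadParams Λ k) (Fin.tail k) (i + 1) = alphExp Λ k (i + 1 + 1) := by
  simp only [alphExp_eq_psum, mergeHeadParams, Nat.add_sub_cancel, psum_succ, Fin.cons_zero,
    Fin.cons_succ, Fin.tail, Fin.succ_zero_eq_one]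
  ring

lemma Rpoly_eq_mergeHead {n : ℕ} (Λ : Fin (n + 3) → ℝ) (k : Fin (n + 2) → ℕ)
    (x : Fin (n + 2) → ℝ) :
    Rpoly Λ k x =
      (x 0 + x 1) ^ k 0 * jacobiP (k 0) (Λ 1 - 1) (Λ 0 - 1) ((x 0 - x 1) / (x 0 + x 1)) *
        Rpoly (mergeHeadParams Λ k) (Fin.tail k) (mergeHead x) := by
  unfold Rpoly
  rw [dif_pos (Nat.succ_pos _), dif_pos (Nat.succ_pos _), Fin.prod_univ_succ, mul_left_comm]
  congr 1
  · simp [psum_one, alphExp_one]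
  congr 1
  · rw [alphExp_mergeHeadParams, psum_mergeHead]
    rfl
  refine Finset.prod_congr rfl fun j _ => ?_
  simp only [Fin.val_succ]
  by_cases h : (j : ℕ) + 1 < n + 1
  · rw [dif_pos (by omega), dif_pos h, alphExp_mergeHeadParams, psum_mergeHead]
    rfl
  · rw [dif_neg (by omega), dif_neg h]

lemma phiMap_zero {n : ℕ} (y : Fin (n + 1) → ℝ) (u : ℝ) :
    phiMap (n + 2) (Nat.le_add_left 2 n) y u 0 = y 0 * (1 + u) / 2 := by
  simp [phiMap]

lemma phiMap_one {n : ℕ} (y : Fin (n + 1) → ℝ) (u : ℝ) :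
    phiMap (n + 2) (Nat.le_add_left 2 n) y u 1 = y 0 * (1 - u) / 2 := by
  simp [phiMap]

lemma mergeHead_phiMap {n : ℕ} (y : Fin (n + 1) → ℝ) (u : ℝ) :
    mergeHead (phiMap (n + 2) (Nat.le_add_left 2 n) y u) = y := by
  ext j
  cases j using Fin.cases with
  | zero =>
    rw [mergeHead, Fin.cons_zero, phiMap_zero, phiMap_one]
    ring
  | succ j => rfl

theorem Rpoly_phiMap {n : ℕ} (Λ : Fin (n + 3) → ℝ) (k : Fin (n + 2) → ℕ)
    (y : Fin (n + 1) → ℝ) (hy : y 0 ≠ 0) (u : ℝ) :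
    Rpoly Λ k (phiMap (n + 2) (Nat.le_add_left 2 n) y u) =
      Rpoly (mergeHeadParams Λ k) (Fin.tail k) y * jacobiP (k 0) (Λ 1 - 1) (Λ 0 - 1) u *
        y 0 ^ k 0 := by
  have hsum : y 0 * (1 + u) / 2 + y 0 * (1 - u) / 2 = y 0 := by ring
  have hdiff : y 0 * (1 + u) / 2 - y 0 * (1 - u) / 2 = y 0 * u := by ring
  rw [Rpoly_eq_mergeHead, mergeHead_phiMap, phiMap_zero, phiMap_one, hsum, hdiff,
    mul_div_cancel_left₀ u hy]
  ring

/-- Factorization `R_𝐤^Λ(φ(y,u)) = R_{𝐤̃}^{Λ̃}(y) · P_{k₁}^{λ₂-1,λ₁-1}(u) · y₁^{k₁}`.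
Here the dimension is `n = m + 1` with `m ≥ 1`, i.e. `n ≥ 2`. -/
theorem stmt9 (m : ℕ) (hm : 1 ≤ m) (Λ : Fin (m + 2) → ℝ) (k : Fin (m + 1) → ℕ) :
    ∀ y ∈ simplexD m, ∀ u ∈ Set.Ioo (-1 : ℝ) 1,
      Rpoly Λ k (phiMap (m + 1) (by omega) y u)
        = Rpoly (n := m)
            (fun j : Fin (m + 1) => if (j : ℕ) = 0 then Λ 0 + Λ 1 + 2 * (k 0 : ℝ)
              else Λ ⟨(j : ℕ) + 1, by have := j.isLt; omega⟩)
            (fun j : Fin m => k ⟨(j : ℕ) + 1, by have := j.isLt; omega⟩) y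
          * jacobiP (k 0) (Λ 1 - 1) (Λ 0 - 1) u * y ⟨0, by omega⟩ ^ (k 0) := by
  obtain ⟨n, rfl⟩ : ∃ n, m = n + 1 := ⟨m - 1, by omega⟩
  intro y hy u _
  have hΛ : (fun j : Fin (n + 2) => if (j : ℕ) = 0 then Λ 0 + Λ 1 + 2 * (k 0 : ℝ)
      else Λ ⟨(j : ℕ) + 1, by omega⟩) = mergeHeadParams Λ k := by
    ext j
    cases j using Fin.cases with
    | zero => simp [mergeHeadParams]
    | succ j => rfl
  rw [hΛ]
  exact Rpoly_phiMap Λ k y (hy.1 0).ne' u
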